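/- arXiv:2407.19882 — 5 statements merged into one kernel-verified Lean document; each statement's English description precedes it below -/
import Mathlib

section
/- For every nonnegative integer n and complex number x, ∑_{k=0}^n C(x,k)·C(x+k,k)·(-4)^k / C(2k,k) − 2x(x+1) · ∑_{k=0}^n C(x,k)·C(x+k,k)·(-4)^k / ((k+1)·C(2k,k)) = 1 + (-1)^n · 2^{2n+1} · (n−x)·(n+1+x)·C(x,n)·C(x+n,n) / ((n+1)·C(2n,n)). -/
/-!
Writing `t k = C(x,k) C(x+k,k) (-4)^k / C(2k,k)`, the ratio `t (k+1) / t k` is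
`2 (k-x)(k+1+x) / ((k+1)(2k+1))`, so the `n`-th error term `2 (n-x)(n+1+x) t n / (n+1)` equals
`(2n+1) t (n+1)`. With this, the difference of consecutive right-hand sides is exactly the
`(n+1)`-st summand `t (n+1) (1 - 2x(x+1)/(n+2))` of the combined sum, and the identity telescopes.
-/

open Finset

/-- Generalized binomial coefficient `C(x,k) = x(x-1)⋯(x-k+1)/k!`. -/
noncomputable def gbinom (x : ℂ) (k : ℕ) : ℂ :=
  (∏ i ∈ Finset.range k, (x - i)) / (k.factorial : ℂ)

lemma gbinom_zero (x : ℂ) : gbinom x 0 = 1 := by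
  simp [gbinom]

lemma gbinom_succ (x : ℂ) (n : ℕ) :
    gbinom x (n + 1) = gbinom x n * (x - n) / (n + 1) := by
  have hf : (n.factorial : ℂ) ≠ 0 := by exact_mod_cast n.factorial_ne_zero
  have hn : (n : ℂ) + 1 ≠ 0 := Nat.cast_add_one_ne_zero n
  simp only [gbinom, prod_range_succ, Nat.factorial_succ]
  push_cast
  field_simp

lemma gbinom_add_one_succ (y : ℂ) (n : ℕ) :
    gbinom (y + 1) (n + 1) = gbinom y n * (y + 1) / (n + 1) := by
  have hf : (n.factorial : ℂ) ≠ 0 := by exact_mod_cast n.factorial_ne_zero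
  have hn : (n : ℂ) + 1 ≠ 0 := Nat.cast_add_one_ne_zero n
  have hshift : ∀ i ∈ range n, y + 1 - ((i + 1 : ℕ) : ℂ) = y - i := by
    intro i _
    push_cast
    ring
  simp only [gbinom, prod_range_succ', prod_congr rfl hshift, Nat.factorial_succ]
  push_cast
  field_simp
  ring

noncomputable def gbinomTerm (x : ℂ) (k : ℕ) : ℂ :=
  gbinom x k * gbinom (x + k) k * (-4) ^ k / (Nat.choose (2 * k) k : ℂ)

lemma gbinomTerm_zero (x : ℂ) : gbinomTerm x 0 = 1 := by
  simp [gbinomTerm, gbinom_zero]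

lemma gbinomTerm_succ (x : ℂ) (n : ℕ) :
    gbinomTerm x (n + 1) * ((n + 1) * (2 * n + 1)) =
      2 * (n - x) * (n + 1 + x) * gbinomTerm x n := by
  have hn : (n : ℂ) + 1 ≠ 0 := Nat.cast_add_one_ne_zero n
  have h2n : (n : ℂ) * 2 + 1 ≠ 0 := by exact_mod_cast Nat.succ_ne_zero (n * 2)
  have hc : (n.centralBinom : ℂ) ≠ 0 := by exact_mod_cast n.centralBinom_ne_zero
  have hcentral : ((n + 1).centralBinom : ℂ) = 2 * (2 * n + 1) * n.centralBinom / (n + 1) := by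
    rw [eq_div_iff hn, mul_comm]
    exact_mod_cast n.succ_mul_centralBinom_succ
  have hx : x + ((n + 1 : ℕ) : ℂ) = x + n + 1 := by push_cast; ring
  simp only [gbinomTerm, ← Nat.centralBinom.eq_1]
  rw [hx, gbinom_add_one_succ, gbinom_succ, pow_succ, hcentral]
  field_simp
  ring

lemma sum_gbinomTerm_mul (x : ℂ) (n : ℕ) :
    ∑ k ∈ range (n + 1), gbinomTerm x k * (1 - 2 * x * (x + 1) / (k + 1)) =
      1 + 2 * (n - x) * (n + 1 + x) / (n + 1) * gbinomTerm x n := by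
  induction n with
  | zero =>
    simp only [zero_add, sum_range_one, gbinomTerm_zero, Nat.cast_zero]
    ring
  | succ n ih =>
    have hn : (n : ℂ) + 1 ≠ 0 := Nat.cast_add_one_ne_zero n
    have hn' : (n : ℂ) + 1 + 1 ≠ 0 := by exact_mod_cast Nat.succ_ne_zero (n + 1)
    rw [sum_range_succ, ih]
    push_cast
    field_simp
    linear_combination -(n + 1 + 1) * gbinomTerm_succ x n

theorem stmt2 (n : ℕ) (x : ℂ) :
    (∑ k ∈ Finset.range (n + 1),
        gbinom x k * gbinom (x + k) k * (-4 : ℂ) ^ k / (Nat.choose (2 * k) k : ℂ)) -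
      2 * x * (x + 1) *
        ∑ k ∈ Finset.range (n + 1),
          gbinom x k * gbinom (x + k) k * (-4 : ℂ) ^ k /
            (((k : ℂ) + 1) * (Nat.choose (2 * k) k : ℂ)) =
      1 + (-1 : ℂ) ^ n * 2 ^ (2 * n + 1) * ((n : ℂ) - x) * ((n : ℂ) + 1 + x) * gbinom x n *
          gbinom (x + n) n / (((n : ℂ) + 1) * (Nat.choose (2 * n) n : ℂ)) := by
  have hpow : (-1 : ℂ) ^ n * 2 ^ (2 * n + 1) = 2 * (-4) ^ n := by
    rw [pow_succ, pow_mul, show (-4 : ℂ) = -1 * 2 ^ 2 by norm_num, mul_pow]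
    ring
  calc _ = ∑ k ∈ range (n + 1), gbinomTerm x k * (1 - 2 * x * (x + 1) / (k + 1)) := by
        rw [mul_sum, ← sum_sub_distrib]
        refine sum_congr rfl fun k _ => ?_
        rw [gbinomTerm, div_mul_eq_div_div_swap]
        ring
    _ = 1 + 2 * (n - x) * (n + 1 + x) / (n + 1) * gbinomTerm x n := sum_gbinomTerm_mul x n
    _ = _ := by
        rw [gbinomTerm, hpow, div_mul_eq_div_div_swap]
        ring
end

section
/- For every nonnegative integer n and complex number x, let G_n(x) = ∑_{k=0}^n C(x,k)·C(x+k,k)·(-2)^k / C(2k,k). Then G_n(x) + G_n(x+2) = (-1)^n · 2^{n+1} · C(x+1,n)·C(x+1+n,n) / C(2n,n). -/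
open Finset

/-- `G_n(x) = ∑_{k=0}^n C(x,k)·C(x+k,k)·(-2)^k / C(2k,k)`. -/
noncomputable def G (n : ℕ) (x : ℂ) : ℂ :=
  ∑ k ∈ Finset.range (n + 1),
    gbinom x k * gbinom (x + k) k * (-2 : ℂ) ^ k / (Nat.choose (2 * k) k : ℂ)

/-!
Trinomial revision turns each summand into a single binomial coefficient,
`C(x,k) C(x+k,k) / C(2k,k) = C(x+k,2k)`, and likewise the right-hand side into
`(-1)^n 2^(n+1) C(x+1+n,2n)`. In this form the induction step is the second-difference
identity `C(y+2,m+2) - 2 C(y+1,m+2) + C(y,m+2) = C(y,m)`, i.e. Pascal's rule applied twice,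
so the induction runs in an arbitrary commutative binomial ring.
-/

theorem gbinom_eq_choose (x : ℂ) (k : ℕ) : gbinom x k = Ring.choose x k := by
  rw [Ring.choose_eq_smul, gbinom, ← descPochhammer_eval_eq_prod_range,
    ← Polynomial.aeval_eq_smeval, Polynomial.aeval_def, Polynomial.eval₂_eq_eval_map,
    descPochhammer_map, smul_eq_mul, div_eq_inv_mul]

namespace Ring

theorem choose_mul_choose_add_div_choose_two_mul {K : Type*} [Field K] [CharZero K]
    (x : K) (k : ℕ) :
    choose x k * choose (x + k) k / (Nat.choose (2 * k) k : K) = choose (x + k) (2 * k) := by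
  have h := choose_add_smul_choose x k k
  rw [← two_mul, nsmul_eq_mul] at h
  rw [div_eq_iff (by exact_mod_cast (Nat.choose_pos (by omega)).ne'), mul_comm (choose x k),
    ← h, mul_comm]

variable {R : Type*} [CommRing R] [BinomialRing R]

theorem choose_add_two_add_choose (y : R) (m : ℕ) :
    choose (y + 2) (m + 2) + choose y (m + 2) = 2 * choose (y + 1) (m + 2) + choose y m := by
  have h₁ := choose_succ_succ (y + 1) (m + 1)
  have h₂ := choose_succ_succ y (m + 1)
  have h₃ := choose_succ_succ y m
  rw [add_assoc, one_add_one_eq_two] at h₁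
  linear_combination h₁ - h₂ + h₃

theorem sum_neg_two_pow_mul_choose (x : R) (n : ℕ) :
    ∑ k ∈ range (n + 1), (-2 : R) ^ k * (choose (x + k) (2 * k) + choose (x + 2 + k) (2 * k)) =
      (-1) ^ n * 2 ^ (n + 1) * choose (x + 1 + n) (2 * n) := by
  induction n with
  | zero => norm_num [one_add_one_eq_two]
  | succ n ih =>
    have h := choose_add_two_add_choose (x + 1 + n) (2 * n)
    have e₁ : x + ((n + 1 : ℕ) : R) = x + 1 + n := by push_cast; ring
    have e₂ : x + 2 + ((n + 1 : ℕ) : R) = x + 1 + n + 2 := by push_cast; ring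
    have e₃ : x + 1 + ((n + 1 : ℕ) : R) = x + 1 + n + 1 := by push_cast; ring
    rw [sum_range_succ, ih, e₁, e₂, e₃, show 2 * (n + 1) = 2 * n + 2 by ring, neg_pow (2 : R)]
    linear_combination (-1) ^ (n + 1) * 2 ^ (n + 1) * h

end Ring

theorem G_eq_sum_choose (n : ℕ) (x : ℂ) :
    G n x = ∑ k ∈ range (n + 1), (-2 : ℂ) ^ k * Ring.choose (x + k) (2 * k) := by
  refine sum_congr rfl fun k _ => ?_
  rw [gbinom_eq_choose, gbinom_eq_choose, ← Ring.choose_mul_choose_add_div_choose_two_mul]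
  ring

theorem stmt3 (n : ℕ) (x : ℂ) :
    G n x + G n (x + 2) =
      (-1 : ℂ) ^ n * 2 ^ (n + 1) * gbinom (x + 1) n * gbinom (x + 1 + n) n /
        (Nat.choose (2 * n) n : ℂ) := by
  rw [G_eq_sum_choose, G_eq_sum_choose, ← sum_add_distrib]
  simp_rw [← mul_add]
  rw [Ring.sum_neg_two_pow_mul_choose, gbinom_eq_choose, gbinom_eq_choose,
    ← Ring.choose_mul_choose_add_div_choose_two_mul]
  ring
end

section
/- Let p be an odd prime. Then p · ∑_{k=1}^{p-1} 4^k / (k·C(2k,k)) ≡ −2 + 2p − 4p·q_p(2) (mod p²), where q_p(2) = (2^{p-1} − 1)/p is the Fermat quotient. -/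
/-!
The sum telescopes: `∑_{k=1}^n 4^k / (k C(2k,k)) = 2·4^n / C(2n,n) - 2`, so `p` times the sum up
to `p - 1` is `4(2p-1)·4^(p-1) / C(2p,p) - 2p`. Babbage's congruence `C(2p,p) ≡ 2 (mod p²)` makes
`C(2p,p)` a `p`-adic unit for odd `p`, and writing `2^(p-1) = 1 + p·q_p(2)` the difference with
`-2 + 2p - 4p·q_p(2)` becomes `p²` times a `p`-adic integer.
-/

open Finset

theorem Nat.Prime.choose_two_mul_self_modEq_two {p : ℕ} (hp : p.Prime) :
    (2 * p).choose p ≡ 2 [MOD p ^ 2] := by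
  have hmid : p ^ 2 ∣ ∑ i ∈ Ioo 0 p, p.choose i * p.choose (p - i) :=
    dvd_sum fun i hi => by
      rw [mem_Ioo] at hi
      rw [sq]
      exact mul_dvd_mul (hp.dvd_choose_self hi.1.ne' hi.2)
        (hp.dvd_choose_self (by omega) (by omega))
  have hsplit : range (p + 1) = insert 0 (insert p (Ioo 0 p)) := by
    ext i; simp; omega
  rw [two_mul, Nat.add_choose_eq, Nat.sum_antidiagonal_eq_sum_range_succ_mk, hsplit,
    sum_insert (by simp [hp.ne_zero.symm]), sum_insert (by simp)]
  simp only [Nat.choose_zero_right, Nat.sub_zero, Nat.choose_self, Nat.sub_self, mul_one]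
  rw [← add_assoc]
  exact (Nat.modEq_zero_iff_dvd.mpr hmid).add_left 2

theorem Nat.Prime.not_dvd_choose_two_mul_self {p : ℕ} (hp : p.Prime) (hodd : Odd p) :
    ¬ p ∣ (2 * p).choose p := fun hdvd => by
  have h2 : 2 ≡ 0 [MOD p] :=
    (hp.choose_two_mul_self_modEq_two.of_dvd (dvd_pow_self p two_ne_zero)).symm.trans
      (Nat.modEq_zero_iff_dvd.mpr hdvd)
  exact hp.one_lt.ne' ((Nat.coprime_two_right.mpr hodd).eq_one_of_dvd (Nat.modEq_zero_iff_dvd.mp h2))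

theorem Padic.exists_eq_mul_padicInt_of_mul_natCast_eq {p : ℕ} [Fact p.Prime] {x y : ℚ_[p]}
    {b : ℕ} (hb : ¬ p ∣ b) {e : ℤ} (h : x * b = y * e) : ∃ c : ℤ_[p], x = y * c := by
  have hb1 : ‖(b : ℚ_[p])‖ = 1 :=
    Padic.norm_natCast_eq_one_iff.mpr ((Nat.Prime.coprime_iff_not_dvd Fact.out).mpr hb)
  have hb0 : (b : ℚ_[p]) ≠ 0 := norm_ne_zero_iff.mp (by simp [hb1])
  refine ⟨⟨e / b, by simpa [norm_div, hb1] using Padic.norm_int_le_one e⟩, ?_⟩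
  show x = y * (e / b)
  rw [← mul_div_assoc, eq_div_iff hb0, h]

section CentralBinomialSum

variable {K : Type*} [Field K] [CharZero K]

theorem sum_Icc_four_pow_div_mul_choose (n : ℕ) :
    ∑ k ∈ Icc 1 n, (4 : K) ^ k / (k * (2 * k).choose k) = 2 * 4 ^ n / (2 * n).choose n - 2 := by
  induction n with
  | zero => simp
  | succ n ih =>
    have hrec : ((n : K) + 1) * (2 * (n + 1)).choose (n + 1) =
        2 * (2 * n + 1) * (2 * n).choose n := by
      exact_mod_cast Nat.succ_mul_centralBinom_succ n
    have hB : ((2 * n).choose n : K) ≠ 0 := Nat.cast_ne_zero.mpr (Nat.choose_pos (by omega)).ne'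
    have hB' : ((2 * (n + 1)).choose (n + 1) : K) ≠ 0 :=
      Nat.cast_ne_zero.mpr (Nat.choose_pos (by omega)).ne'
    rw [sum_Icc_succ_top (by omega), ih]
    push_cast
    field_simp
    linear_combination (2 * 4 ^ n) * hrec

theorem natCast_mul_sum_Icc_four_pow_div_mul_choose {p : ℕ} (hp : 0 < p) :
    (p : K) * ∑ k ∈ Icc 1 (p - 1), (4 : K) ^ k / (k * (2 * k).choose k) =
      4 * (2 * p - 1) * 4 ^ (p - 1) / (2 * p).choose p - 2 * p := by
  obtain ⟨n, rfl⟩ := Nat.exists_eq_add_of_lt hp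
  have hrec : ((n : K) + 1) * (2 * (n + 1)).choose (n + 1) =
      2 * (2 * n + 1) * (2 * n).choose n := by
    exact_mod_cast Nat.succ_mul_centralBinom_succ n
  have hB : ((2 * n).choose n : K) ≠ 0 := Nat.cast_ne_zero.mpr (Nat.choose_pos (by omega)).ne'
  have hB' : ((2 * (n + 1)).choose (n + 1) : K) ≠ 0 :=
    Nat.cast_ne_zero.mpr (Nat.choose_pos (by omega)).ne'
  simp only [zero_add, Nat.add_sub_cancel, sum_Icc_four_pow_div_mul_choose]
  push_cast
  field_simp
  linear_combination (2 * 4 ^ n) * hrec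

end CentralBinomialSum

theorem stmt5 (p : ℕ) [Fact p.Prime] (hp : Odd p) :
    ∃ c : ℤ_[p],
      (p : ℚ_[p]) * (∑ k ∈ Finset.Icc 1 (p - 1), (4 : ℚ_[p]) ^ k / ((k : ℚ_[p]) * (Nat.choose (2 * k) k : ℚ_[p]))) -
        (-2 + 2 * (p : ℚ_[p]) - 4 * (p : ℚ_[p]) * (((2 : ℚ_[p]) ^ (p - 1) - 1) / (p : ℚ_[p]))) =
      (p : ℚ_[p]) ^ 2 * (c : ℚ_[p]) := by
  have hprime : p.Prime := Fact.out
  obtain ⟨t, ht⟩ : (p : ℤ) ∣ 2 ^ (p - 1) - 1 := Int.prime_dvd_pow_sub_one hprime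
    (by exact_mod_cast Nat.isCoprime_iff_coprime.mpr (Nat.coprime_two_left.mpr hp))
  obtain ⟨m, hm⟩ := hprime.choose_two_mul_self_modEq_two.symm.dvd
  -- `e` is the difference times `C(2p,p)`, divided by `p²`, once `2^(p-1) = 1 + p t`, `C(2p,p) = 2 + p² m`.
  refine Padic.exists_eq_mul_padicInt_of_mul_natCast_eq (hprime.not_dvd_choose_two_mul_self hp)
    (e := 16 * t - 4 * t ^ 2 + 8 * p * t ^ 2 + m * (2 - 4 * p + 4 * p * t)) ?_
  have hfermat : (2 : ℚ_[p]) ^ (p - 1) = 1 + p * t := by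
    exact_mod_cast (show (2 : ℤ) ^ (p - 1) = 1 + p * t by linarith)
  have hfour : (4 : ℚ_[p]) ^ (p - 1) = (1 + p * t) ^ 2 := by
    rw [← hfermat, ← pow_mul, mul_comm, pow_mul]; norm_num
  have hbabbage : ((2 * p).choose p : ℚ_[p]) = 2 + p ^ 2 * m := by
    exact_mod_cast (show ((2 * p).choose p : ℤ) = 2 + p ^ 2 * m by push_cast at hm; linarith)
  have hp0 : (p : ℚ_[p]) ≠ 0 := Nat.cast_ne_zero.mpr hprime.ne_zero
  have hC0 : ((2 * p).choose p : ℚ_[p]) ≠ 0 := Nat.cast_ne_zero.mpr (Nat.choose_pos (by omega)).ne'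
  rw [natCast_mul_sum_Icc_four_pow_div_mul_choose hprime.pos, hfour, hfermat]
  field_simp
  rw [hbabbage]
  push_cast
  ring
end

section
/- Let p be an odd prime. Then p · ∑_{k=1}^{p-1} 2^k / ((2k+1)·C(2k,k)) ≡ (−1/p) − p (mod p²), where (−1/p) is the Legendre symbol of −1 modulo p, i.e., (−1)^{(p−1)/2}. -/
/-!
Let `t k = 2^k / ((2k+1) C(2k,k))`, so that `t 0 = 1` and the claim is
`p ∑_{k<p} t k ≡ (-1)^h (mod p²)` with `p = 2h+1`. Partial fractions at `x = 1/2` give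
`4^k / ((2k+1) C(2k,k)) = ∑_{n ≤ k} (-1)^n C(k,n) / (2n+1)`; interchanging the sums turns
`∑_{k<p} t k` into `∑_{n<p} (-1)^n/(2n+1) · ∑_{k<p} C(k,n)/2^k`, and the inner sum equals
`2 - 2 (∑_{j ≤ n} C(p,j)) / 2^p`. The term `n = h` is exactly `(-1)^h / p`. The other terms pair
off as `n ↔ p-1-n`: since `∑_{j ≤ n} C(p,j) ≡ 1 (mod p)` for `n < p` and
`2(p-1-n)+1 ≡ -(2n+1) (mod p)`, each pair is a `p`-adic integer divisible by `p`.
-/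

open Finset Nat

theorem Nat.sum_range_succ_choose_add_choose (N n : ℕ) :
    ∑ j ∈ range (n + 1), (N + 1).choose j + N.choose n =
      2 * ∑ j ∈ range (n + 1), N.choose j := by
  induction n with
  | zero => simp
  | succ n ih =>
    rw [sum_range_succ, sum_range_succ _ (n + 1), choose_succ_succ']
    linarith

theorem Nat.Prime.sum_range_choose_modEq_one {p n : ℕ} (hp : p.Prime) (hn : n < p) :
    ∑ j ∈ range (n + 1), p.choose j ≡ 1 [MOD p] := by
  rw [sum_range_succ', choose_zero_right]
  simpa using (Nat.modEq_zero_iff_dvd.2 <| dvd_sum fun j hj =>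
    hp.dvd_choose_self j.succ_ne_zero (by simp at hj; omega)).add_right 1

/-- `(-1)ⁿ/(2n+1) · ∑_{k<N} C(k,n)/2ᵏ`, with the inner sum in the closed form of
`sum_range_choose_div_two_pow`. -/
noncomputable def binomTailTerm (K : Type*) [Field K] (N n : ℕ) : K :=
  (-1) ^ n / (2 * n + 1) * (2 - 2 * (∑ j ∈ range (n + 1), (N.choose j : K)) / 2 ^ N)

section Field

variable {K : Type*} [Field K]

theorem sum_range_alternating_choose_succ_div (k : ℕ) (x : K) :
    ∑ n ∈ range (k + 2), (-1) ^ n * ((k + 1).choose n : K) / (x + n) =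
      ∑ n ∈ range (k + 1), (-1) ^ n * (k.choose n : K) / (x + n) -
        ∑ n ∈ range (k + 1), (-1) ^ n * (k.choose n : K) / (x + 1 + n) := by
  set f : ℕ → K := fun n => (-1) ^ n * (k.choose n : K) / (x + n) with hf
  have hf_shift : ∑ n ∈ range (k + 1), f n =
      ∑ n ∈ range (k + 1), f (n + 1) + f 0 := by
    rw [← sum_range_succ' f (k + 1), sum_range_succ f (k + 1), left_eq_add]
    simp [hf]
  have hpascal : ∀ n, (-1) ^ (n + 1) * ((k + 1).choose (n + 1) : K) / (x + (n + 1 : ℕ)) =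
      f (n + 1) - (-1) ^ n * (k.choose n : K) / (x + 1 + n) := by
    intro n
    rw [hf, choose_succ_succ']
    push_cast
    ring
  rw [sum_range_succ', hf_shift, sum_congr rfl fun n _ => hpascal n, sum_sub_distrib]
  simp only [hf, cast_zero, add_zero, pow_zero, choose_zero_right, cast_one, mul_one]
  ring

theorem sum_range_alternating_choose_div (k : ℕ) {x : K}
    (hx : ∏ j ∈ range (k + 1), (x + j) ≠ 0) :
    ∑ n ∈ range (k + 1), (-1) ^ n * (k.choose n : K) / (x + n) =
      k ! / ∏ j ∈ range (k + 1), (x + j) := by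
  induction k generalizing x with
  | zero => simp
  | succ k ih =>
    have hsucc : ∏ j ∈ range (k + 2), (x + j) =
        (∏ j ∈ range (k + 1), (x + j)) * (x + (k + 1)) := by
      rw [prod_range_succ]; push_cast; ring
    have hsucc' : ∏ j ∈ range (k + 2), (x + j) =
        (∏ j ∈ range (k + 1), (x + 1 + j)) * x := by
      rw [prod_range_succ']; push_cast; simp only [add_assoc, add_comm (1 : K), add_zero]
    have hP := left_ne_zero_of_mul (hsucc ▸ hx)
    have hxk := right_ne_zero_of_mul (hsucc ▸ hx)
    have hP' := left_ne_zero_of_mul (hsucc' ▸ hx)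
    rw [hsucc, sum_range_alternating_choose_succ_div, ih hP, ih hP', factorial_succ]
    field_simp
    push_cast
    linear_combination -(k ! : K) * (hsucc.symm.trans hsucc')

variable [CharZero K]

theorem two_mul_four_pow_mul_prod_range_half_add (k : ℕ) :
    2 * 4 ^ k * ∏ j ∈ range (k + 1), (1 / 2 + j : K) = k ! * (2 * k + 1) * k.centralBinom := by
  induction k with
  | zero => norm_num
  | succ k ih =>
    have hcb : ((k + 1 : ℕ) : K) * (k + 1).centralBinom = 2 * (2 * k + 1) * k.centralBinom := by
      exact_mod_cast succ_mul_centralBinom_succ k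
    rw [prod_range_succ, factorial_succ]
    push_cast at hcb ⊢
    linear_combination (4 * (k : K) + 6) * ih - (k ! : K) * (2 * k + 3) * hcb

theorem sum_range_alternating_choose_div_two_mul_add_one (k : ℕ) :
    ∑ n ∈ range (k + 1), (-1) ^ n * (k.choose n : K) / (2 * n + 1) =
      4 ^ k / ((2 * k + 1) * k.centralBinom) := by
  have hprod := two_mul_four_pow_mul_prod_range_half_add (K := K) k
  have hk : (2 * k + 1 : K) ≠ 0 := by exact_mod_cast (2 * k).succ_ne_zero
  have hP : ∏ j ∈ range (k + 1), (1 / 2 + j : K) ≠ 0 := by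
    intro h
    rw [h, mul_zero] at hprod
    simp [hk, k.centralBinom_ne_zero, k.factorial_ne_zero] at hprod
  have hhalf : ∀ n : ℕ, (-1) ^ n * (k.choose n : K) / (2 * n + 1) =
      1 / 2 * ((-1) ^ n * (k.choose n : K) / (1 / 2 + n)) := by
    intro n
    rw [one_div_mul_eq_div, div_div]
    congr 1
    ring
  rw [sum_congr rfl fun n _ => hhalf n, ← mul_sum, sum_range_alternating_choose_div k hP]
  have hcb : (k.centralBinom : K) ≠ 0 := by exact_mod_cast k.centralBinom_ne_zero
  generalize ∏ j ∈ range (k + 1), (1 / 2 + j : K) = P at hP hprod ⊢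
  field_simp
  linear_combination -hprod

theorem sum_range_choose_div_two_pow (N n : ℕ) :
    ∑ k ∈ range N, (k.choose n : K) / 2 ^ k =
      2 - 2 * (∑ j ∈ range (n + 1), (N.choose j : K)) / 2 ^ N := by
  induction N with
  | zero => simp [sum_range_succ']
  | succ N ih =>
    have hrow : ∑ j ∈ range (n + 1), ((N + 1).choose j : K) + N.choose n =
        2 * ∑ j ∈ range (n + 1), (N.choose j : K) := by
      exact_mod_cast Nat.sum_range_succ_choose_add_choose N n
    rw [sum_range_succ, ih, eq_sub_of_add_eq hrow, pow_succ]
    field_simp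
    ring

theorem sum_range_two_pow_div_centralBinom (N : ℕ) :
    ∑ k ∈ range N, (2 : K) ^ k / ((2 * k + 1) * k.centralBinom) =
      ∑ n ∈ range N, binomTailTerm K N n := by
  have hterm : ∀ k ∈ range N, (2 : K) ^ k / ((2 * k + 1) * k.centralBinom) =
      ∑ n ∈ range N, (-1) ^ n / (2 * n + 1) * ((k.choose n : K) / 2 ^ k) := by
    intro k hk
    have hext : ∑ n ∈ range (k + 1), (-1) ^ n * (k.choose n : K) / (2 * n + 1) =
        ∑ n ∈ range N, (-1) ^ n * (k.choose n : K) / (2 * n + 1) := by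
      refine sum_subset (range_subset_range.2 (mem_range.1 hk)) fun n _ hn => ?_
      rw [choose_eq_zero_of_lt (by simpa using hn)]
      simp
    have h4 : (4 : K) ^ k = 2 ^ k * 2 ^ k := by rw [← mul_pow]; norm_num
    calc (2 : K) ^ k / ((2 * k + 1) * k.centralBinom)
        = 4 ^ k / ((2 * k + 1) * k.centralBinom) / 2 ^ k := by
          rw [h4]; field_simp
      _ = (∑ n ∈ range N, (-1) ^ n * (k.choose n : K) / (2 * n + 1)) / 2 ^ k := by
          rw [← hext, sum_range_alternating_choose_div_two_mul_add_one]
      _ = _ := by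
          rw [sum_div]
          exact sum_congr rfl fun n _ => by ring
  rw [sum_congr rfl hterm, sum_comm]
  refine sum_congr rfl fun n _ => ?_
  rw [← mul_sum, sum_range_choose_div_two_pow, binomTailTerm]

theorem natCast_mul_binomTailTerm_half {N h : ℕ} (hN : N = 2 * h + 1) :
    (N : K) * binomTailTerm K N h = (-1) ^ h := by
  subst hN
  have hrow : ∑ j ∈ range (h + 1), ((2 * h + 1).choose j : K) = 4 ^ h := by
    exact_mod_cast sum_range_choose_halfway h
  have hpow : (2 : K) ^ (2 * h + 1) = 2 * 4 ^ h := by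
    rw [pow_succ, pow_mul]; norm_num; ring
  have hh : (2 * h + 1 : K) ≠ 0 := by exact_mod_cast (2 * h).succ_ne_zero
  rw [binomTailTerm, hrow, hpow]
  push_cast
  field_simp
  ring

end Field

section Padic

variable {p : ℕ} [Fact p.Prime]

theorem Padic.exists_eq_mul_of_norm_le {x y : ℚ_[p]} (hy : y ≠ 0)
    (h : ‖x‖ ≤ ‖y‖) : ∃ c : ℤ_[p], x = y * c :=
  ⟨⟨x / y, by rw [norm_div]; exact div_le_one_of_le₀ h (norm_nonneg _)⟩,
    by simp [mul_div_cancel₀ _ hy]⟩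

theorem Padic.norm_natCast_eq_one_of_not_dvd {d : ℕ} (hd : ¬ p ∣ d) :
    ‖(d : ℚ_[p])‖ = 1 :=
  Padic.norm_natCast_eq_one_iff.2 ((Nat.Prime.coprime_iff_not_dvd Fact.out).2 hd)

theorem Padic.norm_two_eq_one_of_odd (hp : Odd p) : ‖(2 : ℚ_[p])‖ = 1 := by
  exact_mod_cast Padic.norm_natCast_eq_one_of_not_dvd (d := 2) fun hd => by
    rw [(Nat.prime_dvd_prime_iff_eq Fact.out Nat.prime_two).1 hd] at hp
    exact Nat.not_odd_iff_even.2 even_two hp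

theorem Padic.norm_two_mul_add_one_eq_one {n : ℕ} (hn : n < p) (hnp : 2 * n + 1 ≠ p) :
    ‖(2 * n + 1 : ℚ_[p])‖ = 1 := by
  exact_mod_cast Padic.norm_natCast_eq_one_of_not_dvd (d := 2 * n + 1) fun hd =>
    hnp (Nat.eq_of_dvd_of_lt_two_mul (2 * n).succ_ne_zero hd (by omega))

theorem norm_binomTailTerm_add_le (hp : Odd p) {n m : ℕ} (hnm : n + m + 1 = p) (hne : n ≠ m) :
    ‖binomTailTerm ℚ_[p] p n + binomTailTerm ℚ_[p] p m‖ ≤ ‖(p : ℚ_[p])‖ := by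
  set Tn := ∑ j ∈ range (n + 1), p.choose j
  set Tm := ∑ j ∈ range (m + 1), p.choose j
  have hT : (p : ℤ) ∣ Tn - Tm :=
    ((Fact.out : p.Prime).sum_range_choose_modEq_one (n := m) (by omega)).trans
      ((Fact.out : p.Prime).sum_range_choose_modEq_one (n := n) (by omega)).symm |>.dvd
  set M : ℤ := (2 ^ p - Tn) * (2 * m + 1) + (2 ^ p - Tm) * (2 * n + 1)
  obtain ⟨M', hM'⟩ : (p : ℤ) ∣ M := by
    have hM : M = p * (2 * (2 ^ p - Tn)) + (Tn - Tm) * (2 * n + 1) := by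
      simp only [M]
      rw [show (m : ℤ) = p - 1 - n by omega]
      ring
    exact hM ▸ dvd_add (dvd_mul_right _ _) (dvd_mul_of_dvd_left hT _)
  have hsign : (-1 : ℚ_[p]) ^ m = (-1) ^ n := by
    have hodd := Nat.odd_iff.1 hp
    rw [neg_one_pow_eq_pow_mod_two, neg_one_pow_eq_pow_mod_two (n := n),
      show m % 2 = n % 2 by omega]
  have hsum : binomTailTerm ℚ_[p] p n + binomTailTerm ℚ_[p] p m =
      2 * (-1) ^ n * (p * (M' : ℚ_[p])) / ((2 * n + 1) * (2 * m + 1) * 2 ^ p) := by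
    have hn0 : (2 * n + 1 : ℚ_[p]) ≠ 0 := by exact_mod_cast (2 * n).succ_ne_zero
    have hm0 : (2 * m + 1 : ℚ_[p]) ≠ 0 := by exact_mod_cast (2 * m).succ_ne_zero
    have hMq : (p * M' : ℚ_[p]) = M := by exact_mod_cast hM'.symm
    rw [hMq, binomTailTerm, binomTailTerm, hsign]
    push_cast [M, Tn, Tm]
    field_simp
  rw [hsum]
  simp only [norm_div, norm_mul, norm_pow, norm_neg, norm_one, one_pow, one_mul, div_one,
    Padic.norm_two_eq_one_of_odd hp, Padic.norm_two_mul_add_one_eq_one (p := p) (n := n) (by omega)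
      (by omega), Padic.norm_two_mul_add_one_eq_one (p := p) (n := m) (by omega) (by omega)]
  exact mul_le_of_le_one_right (norm_nonneg _) (Padic.norm_int_le_one M')

theorem norm_mul_sum_binomTailTerm_sub_le {h : ℕ} (hph : p = 2 * h + 1) :
    ‖(p : ℚ_[p]) * ∑ n ∈ range p, binomTailTerm ℚ_[p] p n - (-1) ^ h‖ ≤
      ‖(p : ℚ_[p])‖ ^ 2 := by
  have hp : Odd p := ⟨h, hph⟩
  set G := binomTailTerm ℚ_[p] p
  have hh : h ∈ range p := mem_range.2 (by omega)
  have hpair : 2 * ((p : ℚ_[p]) * ∑ n ∈ range p, G n - (-1) ^ h) =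
      ∑ n ∈ (range p).erase h, p * (G n + G (p - 1 - n)) := by
    have hfull : ∑ n ∈ range p, p * (G n + G (p - 1 - n)) =
        2 * ((p : ℚ_[p]) * ∑ n ∈ range p, G n) := by
      rw [← mul_sum, sum_add_distrib, sum_range_reflect G p]
      ring
    rw [← sum_erase_add _ _ hh, show p - 1 - h = h by omega, mul_add,
      natCast_mul_binomTailTerm_half hph] at hfull
    linear_combination -hfull
  calc ‖(p : ℚ_[p]) * ∑ n ∈ range p, G n - (-1) ^ h‖
      = ‖2 * ((p : ℚ_[p]) * ∑ n ∈ range p, G n - (-1) ^ h)‖ := by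
        rw [norm_mul, Padic.norm_two_eq_one_of_odd hp, one_mul]
    _ ≤ ‖(p : ℚ_[p])‖ ^ 2 := by
        rw [hpair]
        refine IsUltrametricDist.norm_sum_le_of_forall_le_of_nonneg (by positivity) fun n hn => ?_
        obtain ⟨hnh, hnp⟩ := mem_erase.1 hn
        rw [mem_range] at hnp
        rw [norm_mul, sq]
        exact mul_le_mul_of_nonneg_left (norm_binomTailTerm_add_le hp (by omega) (by omega))
          (norm_nonneg _)

end Padic

theorem stmt7 (p : ℕ) [Fact p.Prime] (hp : Odd p) :
    ∃ c : ℤ_[p],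
      (p : ℚ_[p]) * (∑ k ∈ Finset.Icc 1 (p - 1),
          (2 : ℚ_[p]) ^ k / ((2 * (k : ℚ_[p]) + 1) * (Nat.choose (2 * k) k : ℚ_[p]))) -
        ((-1 : ℚ_[p]) ^ ((p - 1) / 2) - (p : ℚ_[p])) =
      (p : ℚ_[p]) ^ 2 * (c : ℚ_[p]) := by
  obtain ⟨h, hph⟩ := hp
  have hsum :
      ∑ k ∈ Icc 1 (p - 1), (2 : ℚ_[p]) ^ k / ((2 * k + 1) * ((2 * k).choose k : ℚ_[p])) =
      ∑ k ∈ range p, (2 : ℚ_[p]) ^ k / ((2 * k + 1) * k.centralBinom) - 1 := by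
    rw [range_eq_Ico, sum_eq_sum_Ico_succ_bot (by omega), ← Ico_add_one_right_eq_Icc,
      Nat.sub_add_cancel (by omega)]
    simp [centralBinom_eq_two_mul_choose]
  have hp0 : (p : ℚ_[p]) ^ 2 ≠ 0 :=
    pow_ne_zero 2 (by exact_mod_cast (Fact.out : p.Prime).ne_zero)
  refine Padic.exists_eq_mul_of_norm_le hp0 ?_
  rw [hsum, sum_range_two_pow_div_centralBinom, show (p - 1) / 2 = h by omega, norm_pow]
  convert norm_mul_sum_binomTailTerm_sub_le hph using 2
  ring
end

section
/- Let n, m be nonnegative integers with m ≥ 1, and let r, s be integers with s ≥ 0. Then ∑_{0 ≤ k < n, k ≡ r (mod m)} (−1)^{(k−r)/m} · k^s = −(m^s/2) · ( (−1)^{⌊(r−n)/m⌋} · E_s(n/m + {(r−n)/m}) − (−1)^{⌊r/m⌋} · E_s({r/m}) ), where E_s is the s-th Euler polynomial and {a} denotes the fractional part of a. -/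
/-!
Since `n/m + {(r-n)/m} = r/m - ⌊(r-n)/m⌋` and `{r/m} = r/m - ⌊r/m⌋`, the right-hand side is
`-(m^s/2) (A ⌊(r-n)/m⌋ - A ⌊r/m⌋)` with `A j = (-1)^j E_s(r/m - j)`. The identity
`E_s(x+1) + E_s(x) = 2x^s` gives `A (j-1) = A j - 2(-1)^j (r/m - j)^s`, so when `n` grows by one
the right-hand side changes only if `n ≡ r (mod m)`, and then by exactly `(-1)^((n-r)/m) n^s`.
-/

open Finset

/-- Euler polynomials, defined by the recurrence
`E_n(x) = x^n - (1/2) ∑_{k<n} C(n,k) E_k(x)` equivalent to the generating function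
`2e^{xz}/(e^z+1) = ∑ E_n(x) z^n/n!`. -/
noncomputable def eulerPoly : ℕ → Polynomial ℚ
  | n => Polynomial.X ^ n - Polynomial.C (1/2 : ℚ) *
      ∑ k ∈ (Finset.range n).attach, Polynomial.C ((n.choose k.1 : ℚ)) * eulerPoly k.1
  decreasing_by exact Finset.mem_range.mp k.2

lemma eulerPoly_eval (n : ℕ) (x : ℚ) :
    (eulerPoly n).eval x =
      x ^ n - 1 / 2 * ∑ k ∈ range n, (n.choose k : ℚ) * (eulerPoly k).eval x := by
  rw [eulerPoly, ← sum_attach (range n) fun k => (n.choose k : ℚ) * (eulerPoly k).eval x]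
  simp [Polynomial.eval_finsetSum]

lemma eulerPoly_eval_add_one_add_eval (n : ℕ) (x : ℚ) :
    (eulerPoly n).eval (x + 1) + (eulerPoly n).eval x = 2 * x ^ n := by
  induction n using Nat.strong_induction_on with
  | _ n ih =>
    have hsum : ∑ k ∈ range n,
        (n.choose k : ℚ) * ((eulerPoly k).eval (x + 1) + (eulerPoly k).eval x) =
          2 * ((x + 1) ^ n - x ^ n) := by
      have hbin : (x + 1) ^ n = ∑ k ∈ range n, (n.choose k : ℚ) * x ^ k + x ^ n := by
        simp [add_pow, sum_range_succ, mul_comm]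
      rw [hbin, add_sub_cancel_right, mul_sum]
      refine sum_congr rfl fun k hk => ?_
      rw [ih k (mem_range.mp hk)]
      ring
    rw [eulerPoly_eval, eulerPoly_eval (x := x)]
    simp only [mul_add, sum_add_distrib] at hsum
    linarith

lemma Int.sub_one_ediv_of_dvd {a m : ℤ} (hm : 0 < m) (h : m ∣ a) : (a - 1) / m = a / m - 1 := by
  obtain ⟨q, rfl⟩ := h
  rw [sub_eq_neg_add, Int.add_mul_ediv_left _ _ hm.ne', Int.mul_ediv_cancel_left _ hm.ne',
    Int.neg_one_ediv, Int.sign_eq_one_of_pos hm]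
  ring

lemma Int.sub_one_ediv_of_not_dvd {a m : ℤ} (h : ¬ m ∣ a) : (a - 1) / m = a / m := by
  rcases eq_or_ne m 0 with rfl | hm
  · simp
  have hr : a % m ≠ 0 := fun h0 => h (Int.dvd_of_emod_eq_zero h0)
  have := Int.emod_nonneg a hm
  have := Int.emod_lt_abs a hm
  have := Int.mul_ediv_add_emod a m
  exact ((Int.ediv_emod_unique'' (r := a % m - 1) hm).mpr ⟨by linarith, by omega, by omega⟩).1

noncomputable def alternatingEuler (s : ℕ) (x : ℚ) (j : ℤ) : ℚ :=
  (-1) ^ j * (eulerPoly s).eval (x - j)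

lemma alternatingEuler_sub_one (s : ℕ) (x : ℚ) (j : ℤ) :
    alternatingEuler s x (j - 1) = alternatingEuler s x j - 2 * (-1) ^ j * (x - j) ^ s := by
  have h := eulerPoly_eval_add_one_add_eval s (x - j)
  have hsign : (-1 : ℚ) ^ (j - 1) = -(-1) ^ j := by simp [zpow_sub₀, div_neg]
  simp only [alternatingEuler, hsign, Int.cast_sub, Int.cast_one, sub_sub_eq_add_sub,
    add_sub_right_comm]
  linear_combination (-(-1 : ℚ) ^ j) * h

lemma sum_range_filter_dvd_neg_one_zpow_mul_pow {m : ℕ} (hm : 0 < m) (r : ℤ) (s n : ℕ) :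
    ∑ k ∈ (range n).filter (fun k : ℕ => (m : ℤ) ∣ (k - r)),
        (-1 : ℚ) ^ ((k - r) / m) * (k : ℚ) ^ s =
      -((m : ℚ) ^ s / 2) *
        (alternatingEuler s (r / m) ((r - n) / m) - alternatingEuler s (r / m) (r / m)) := by
  induction n with
  | zero => simp
  | succ n ih =>
    rw [sum_filter, sum_range_succ, ← sum_filter, ih, Nat.cast_succ, ← sub_sub]
    by_cases h : (m : ℤ) ∣ n - r
    · obtain ⟨q, hq⟩ := h
      have hrn : r - n = m * -q := by rw [mul_neg, ← hq, neg_sub]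
      have hmq : (m : ℚ) ^ s * ((r : ℚ) / m - (-q : ℤ)) ^ s = (n : ℚ) ^ s := by
        have hnq : (n : ℚ) = r + m * q := by exact_mod_cast (by linarith : (n : ℤ) = r + m * q)
        rw [← mul_pow, hnq]
        field_simp
        push_cast
        ring
      have hm0 : (m : ℤ) ≠ 0 := by positivity
      rw [if_pos ⟨q, hq⟩, Int.sub_one_ediv_of_dvd (by exact_mod_cast hm) ⟨-q, hrn⟩, hrn, hq,
        Int.mul_ediv_cancel_left _ hm0, Int.mul_ediv_cancel_left _ hm0, alternatingEuler_sub_one,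
        zpow_neg, ← inv_zpow, inv_neg_one]
      linear_combination -(-1 : ℚ) ^ q * hmq
    · have hrn : ¬ (m : ℤ) ∣ r - n := fun h' => h (by simpa using h'.neg_right)
      rw [if_neg h, Int.sub_one_ediv_of_not_dvd hrn, add_zero]

theorem stmt9 (n m : ℕ) (hm : 1 ≤ m) (r : ℤ) (s : ℕ) :
    ∑ k ∈ (Finset.range n).filter (fun k : ℕ => (m : ℤ) ∣ ((k : ℤ) - r)),
        (-1 : ℚ) ^ (((k : ℤ) - r) / (m : ℤ)) * (k : ℚ) ^ s =
      -((m : ℚ) ^ s / 2) *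
        ((-1 : ℚ) ^ ⌊((r : ℚ) - (n : ℚ)) / (m : ℚ)⌋ *
            (eulerPoly s).eval ((n : ℚ) / (m : ℚ) + Int.fract (((r : ℚ) - (n : ℚ)) / (m : ℚ))) -
          (-1 : ℚ) ^ ⌊(r : ℚ) / (m : ℚ)⌋ *
            (eulerPoly s).eval (Int.fract ((r : ℚ) / (m : ℚ)))) := by
  have hcast : (r : ℚ) - n = ((r - n : ℤ) : ℚ) := by push_cast; ring
  have hfloor (a : ℤ) : ⌊(a : ℚ) / m⌋ = a / m := Rat.floor_intCast_div_natCast a m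
  have harg : (n : ℚ) / m + Int.fract (((r : ℚ) - n) / m) = r / m - ((r - n) / m : ℤ) := by
    rw [Int.fract, hcast, hfloor]
    push_cast
    ring
  rw [harg, Int.fract, hcast, hfloor, hfloor, sum_range_filter_dvd_neg_one_zpow_mul_pow hm]
  rfl
end
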